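/- Let $(\phi_\alpha)$ be a family of admissible spectra with $\phi_\alpha(u) \to 0$ for each $u \in [0,1)$. Let $g, h: (0,1) \to [0,\infty)$ be measurable functions satisfying: (a) $g(u)/h(u) \to 1$ as $u \to 1$; (b) $g$ and $h$ are bounded on $[0,\alpha_0]$ for every $\alpha_0 < 1$; (c) $\liminf_{\alpha\to 1} \int_0^1 h(u)\phi_\alpha(u)\,du > 0$, with these integrals finite. Then $\int_0^1 g(u)\phi_\alpha(u)\,du \sim \int_0^1 h(u)\phi_\alpha(u)\,du$ as $\alpha \to 1$. -/

import Mathlib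

open MeasureTheory Filter Set
open scoped Topology

def IsAdmissibleSpectrum (φ : ℝ → ℝ) : Prop :=
  Measurable φ ∧ (∀ u ∈ Set.Ico (0:ℝ) 1, 0 ≤ φ u) ∧
  MonotoneOn φ (Set.Ico 0 1) ∧
  (∀ u ∈ Set.Ico (0:ℝ) 1, ContinuousWithinAt φ (Set.Ici u) u) ∧
  ∫ u in Set.Ioo (0:ℝ) 1, φ u = 1

/-!
Split `∫ (g - h) φ_α` at a point `δ < 1`. On `(δ, 1)` the ratio hypothesis gives
`|g - h| ≤ ε h`, so that part is at most `ε ∫ h φ_α`. On `(0, δ]` the difference `g - h` is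
bounded and, by monotonicity, `φ_α ≤ φ_α(δ) → 0`, so that part vanishes in the limit.
Since `∫ h φ_α` stays bounded away from `0`, the relative error is eventually at most
`ε + o(1)`.
-/

lemma exists_abs_sub_le_mul_of_tendsto_div {g h : ℝ → ℝ} {a b ε : ℝ} (hab : a < b)
    (hgh : Tendsto (fun u => g u / h u) (𝓝[<] b) (𝓝 1)) (hε : 0 < ε) :
    ∃ δ ∈ Ioo a b, ∀ u ∈ Ioo δ b, |g u - h u| ≤ ε * |h u| := by
  have hclose : ∀ᶠ u in 𝓝[<] b, |g u - h u| ≤ ε * |h u| := by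
    filter_upwards [hgh.eventually_ne one_ne_zero, Metric.tendsto_nhds.mp hgh ε hε]
      with u hne hdist
    have hh : h u ≠ 0 := (div_ne_zero_iff.mp hne).2
    calc |g u - h u| = |g u / h u - 1| * |h u| := by
          rw [← abs_mul, sub_mul, div_mul_cancel₀ _ hh, one_mul]
      _ ≤ ε * |h u| := by
          rw [← Real.dist_eq]
          exact mul_le_mul_of_nonneg_right hdist.le (abs_nonneg _)
  obtain ⟨l', hal', hl'b⟩ := exists_between hab
  obtain ⟨δ, hδ, hsub⟩ := (mem_nhdsLT_iff_exists_mem_Ico_Ioo_subset hl'b).mp hclose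
  exact ⟨δ, ⟨hal'.trans_le hδ.1, hδ.2⟩, hsub⟩

lemma norm_setIntegral_Ioc_mul_le {f ψ : ℝ → ℝ} {δ K : ℝ} (hδ : 0 < δ)
    (hf : ∀ u ∈ Ioc 0 δ, |f u| ≤ K) (hψ_nonneg : ∀ u ∈ Ioc 0 δ, 0 ≤ ψ u)
    (hψ_le : ∀ u ∈ Ioc 0 δ, ψ u ≤ ψ δ) :
    ‖∫ u in Ioc 0 δ, f u * ψ u‖ ≤ K * ψ δ * δ := by
  have hK : 0 ≤ K := (abs_nonneg _).trans (hf δ ⟨hδ, le_rfl⟩)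
  have hbound : ∀ u ∈ Ioc 0 δ, ‖f u * ψ u‖ ≤ K * ψ δ := fun u hu => by
    rw [Real.norm_eq_abs, abs_mul, abs_of_nonneg (hψ_nonneg u hu)]
    exact mul_le_mul (hf u hu) (hψ_le u hu) (hψ_nonneg u hu) hK
  simpa [Real.volume_real_Ioc_of_le hδ.le] using
    norm_setIntegral_le_of_norm_le_const (measure_Ioc_lt_top (μ := volume)) hbound

lemma norm_setIntegral_mul_le_of_abs_le_mul {α : Type*} [MeasurableSpace α] {μ : Measure α}
    {s : Set α} {f h ψ : α → ℝ} {ε : ℝ} (hs : MeasurableSet s)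
    (hf : ∀ u ∈ s, |f u| ≤ ε * h u) (hψ_nonneg : ∀ u ∈ s, 0 ≤ ψ u)
    (hhψ : IntegrableOn (fun u => h u * ψ u) s μ) :
    ‖∫ u in s, f u * ψ u ∂μ‖ ≤ ε * ∫ u in s, h u * ψ u ∂μ := by
  rw [← integral_const_mul]
  refine norm_integral_le_of_norm_le (hhψ.const_mul ε) ((ae_restrict_iff' hs).mpr
    (Eventually.of_forall fun u hu => ?_))
  rw [Real.norm_eq_abs, abs_mul, abs_of_nonneg (hψ_nonneg u hu), ← mul_assoc]
  exact mul_le_mul_of_nonneg_right (hf u hu) (hψ_nonneg u hu)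

lemma abs_setIntegral_Ioo_sub_le {g h ψ : ℝ → ℝ} {δ K ε : ℝ} (hδ : δ ∈ Ioo (0 : ℝ) 1)
    (hε : 0 ≤ ε) (hh_nonneg : ∀ u ∈ Ioo (0 : ℝ) 1, 0 ≤ h u)
    (hψ_nonneg : ∀ u ∈ Ioo (0 : ℝ) 1, 0 ≤ ψ u) (hψ_le : ∀ u ∈ Ioc 0 δ, ψ u ≤ ψ δ)
    (hK : ∀ u ∈ Ioc 0 δ, |g u - h u| ≤ K) (hclose : ∀ u ∈ Ioo δ 1, |g u - h u| ≤ ε * h u)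
    (hgψ : IntegrableOn (fun u => g u * ψ u) (Ioo 0 1))
    (hhψ : IntegrableOn (fun u => h u * ψ u) (Ioo 0 1)) :
    |(∫ u in Ioo (0 : ℝ) 1, g u * ψ u) - ∫ u in Ioo (0 : ℝ) 1, h u * ψ u|
      ≤ K * ψ δ * δ + ε * ∫ u in Ioo (0 : ℝ) 1, h u * ψ u := by
  have hlow : Ioc 0 δ ⊆ Ioo (0 : ℝ) 1 := Ioc_subset_Ioo_right hδ.2
  have hhigh : Ioo δ 1 ⊆ Ioo (0 : ℝ) 1 := Ioo_subset_Ioo_left hδ.1.le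
  have hdiff : IntegrableOn (fun u => (g u - h u) * ψ u) (Ioo 0 1) := by
    simp_rw [sub_mul]
    exact hgψ.sub hhψ
  have hsplit : (∫ u in Ioo (0 : ℝ) 1, g u * ψ u) - ∫ u in Ioo (0 : ℝ) 1, h u * ψ u
      = (∫ u in Ioc 0 δ, (g u - h u) * ψ u) + ∫ u in Ioo δ 1, (g u - h u) * ψ u := by
    rw [← integral_sub hgψ hhψ, ← Ioc_union_Ioo_eq_Ioo hδ.1.le hδ.2]
    simp_rw [← sub_mul]
    exact setIntegral_union (Ioc_disjoint_Ioi_same.mono_right Ioo_subset_Ioi_self)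
      measurableSet_Ioo (hdiff.mono_set hlow) (hdiff.mono_set hhigh)
  have hnear_zero := norm_setIntegral_Ioc_mul_le hδ.1 hK
    (fun u hu => hψ_nonneg u (hlow hu)) hψ_le
  have hnear_one := norm_setIntegral_mul_le_of_abs_le_mul measurableSet_Ioo hclose
    (fun u hu => hψ_nonneg u (hhigh hu)) (hhψ.mono_set hhigh)
  have hmono : ∫ u in Ioo δ 1, h u * ψ u ≤ ∫ u in Ioo (0 : ℝ) 1, h u * ψ u :=
    setIntegral_mono_set hhψ ((ae_restrict_iff' measurableSet_Ioo).mpr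
      (Eventually.of_forall fun u hu => mul_nonneg (hh_nonneg u hu) (hψ_nonneg u hu)))
      hhigh.eventuallyLE
  rw [hsplit]
  calc _ ≤ ‖∫ u in Ioc 0 δ, (g u - h u) * ψ u‖ + ‖∫ u in Ioo δ 1, (g u - h u) * ψ u‖ :=
        abs_add_le _ _
    _ ≤ K * ψ δ * δ + ε * ∫ u in Ioo (0 : ℝ) 1, h u * ψ u := by
        gcongr
        exact hnear_one.trans (mul_le_mul_of_nonneg_left hmono hε)

lemma tendsto_div_nhds_one_of_abs_sub_le {ι : Type*} {l : Filter ι} {A B : ι → ℝ}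
    (hB : ∀ᶠ i in l, 0 < B i) (h : ∀ ε > 0, ∀ᶠ i in l, |A i - B i| ≤ ε * B i) :
    Tendsto (fun i => A i / B i) l (𝓝 1) := by
  refine Metric.tendsto_nhds.mpr fun ε hε => ?_
  filter_upwards [hB, h (ε / 2) (half_pos hε)] with i hBi hi
  rw [Real.dist_eq, div_sub_one hBi.ne', abs_div, abs_of_pos hBi, div_lt_iff₀ hBi]
  linarith [mul_pos hε hBi]

theorem stmt_18_general (φ : ℝ → ℝ → ℝ)
    (hφ : ∀ α ∈ Set.Ioo (0:ℝ) 1, IsAdmissibleSpectrum (φ α))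
    (hconv : ∀ u ∈ Set.Ico (0:ℝ) 1,
      Tendsto (fun α => φ α u) (𝓝[<] (1:ℝ)) (𝓝 0))
    (g h : ℝ → ℝ)
    (hgnn : ∀ u ∈ Set.Ioo (0:ℝ) 1, 0 ≤ g u) (hhnn : ∀ u ∈ Set.Ioo (0:ℝ) 1, 0 ≤ h u)
    (hratio : Tendsto (fun u => g u / h u) (𝓝[<] (1:ℝ)) (𝓝 1))
    (hbdd : ∀ α₀ ∈ Set.Ioo (0:ℝ) 1, ∃ C : ℝ,
      ∀ u ∈ Set.Ioc (0:ℝ) α₀, g u ≤ C ∧ h u ≤ C)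
    (hgint : ∀ α ∈ Set.Ioo (0:ℝ) 1,
      IntegrableOn (fun u => g u * φ α u) (Set.Ioo 0 1))
    (hhint : ∀ α ∈ Set.Ioo (0:ℝ) 1,
      IntegrableOn (fun u => h u * φ α u) (Set.Ioo 0 1))
    (hliminf : ∃ c > (0:ℝ), ∀ᶠ α in 𝓝[<] (1:ℝ),
      c ≤ ∫ u in Set.Ioo (0:ℝ) 1, h u * φ α u) :
    Tendsto (fun α => (∫ u in Set.Ioo (0:ℝ) 1, g u * φ α u) /
        ∫ u in Set.Ioo (0:ℝ) 1, h u * φ α u)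
      (𝓝[<] (1:ℝ)) (𝓝 1) := by
  obtain ⟨c, hc, hcB⟩ := hliminf
  refine tendsto_div_nhds_one_of_abs_sub_le (hcB.mono fun _ => hc.trans_le) fun ε hε => ?_
  obtain ⟨δ, hδ, hclose⟩ := exists_abs_sub_le_mul_of_tendsto_div one_pos hratio (half_pos hε)
  obtain ⟨K, hK⟩ := hbdd δ hδ
  have hgh_le : ∀ u ∈ Ioc 0 δ, |g u - h u| ≤ K := fun u hu =>
    have hu01 : u ∈ Ioo (0 : ℝ) 1 := Ioc_subset_Ioo_right hδ.2 hu
    abs_sub_le_of_nonneg_of_le (hgnn u hu01) (hK u hu).1 (hhnn u hu01) (hK u hu).2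
  have hsmall : ∀ᶠ α in 𝓝[<] (1 : ℝ), K * φ α δ * δ < ε / 2 * c := by
    have := ((hconv δ ⟨hδ.1.le, hδ.2⟩).const_mul K).mul_const δ
    rw [mul_zero, zero_mul] at this
    exact this.eventually (gt_mem_nhds (by positivity))
  filter_upwards [Ioo_mem_nhdsLT one_pos, hsmall, hcB] with α hα hsmall hcα
  obtain ⟨-, hφ_nonneg, hφ_mono, -, -⟩ := hφ α hα
  have hbound := abs_setIntegral_Ioo_sub_le hδ (half_pos hε).le hhnn
    (fun u hu => hφ_nonneg u (Ioo_subset_Ico_self hu))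
    (fun u hu => hφ_mono ⟨hu.1.le, hu.2.trans_lt hδ.2⟩ ⟨hδ.1.le, hδ.2⟩ hu.2) hgh_le
    (fun u hu => (hclose u hu).trans_eq
      (by rw [abs_of_nonneg (hhnn u (Ioo_subset_Ioo_left hδ.1.le hu))]))
    (hgint α hα) (hhint α hα)
  linarith [mul_le_mul_of_nonneg_left hcα (half_pos hε).le]

/-- lifting principle. If the admissible spectra `φ_α` (each bounded)
converge pointwise to `0` on `[0,1)`, `g, h : (0,1) → [0,∞)` are measurable with
`g/h → 1` at `1⁻`, `g` and `h` bounded on `[0,α₀]` for every `α₀ < 1`, the integrals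
`∫ g φ_α`, `∫ h φ_α` finite, and `liminf ∫ h φ_α > 0`, then
`∫_0^1 g φ_α ∼ ∫_0^1 h φ_α` as `α → 1⁻`. -/
theorem stmt_18 (φ : ℝ → ℝ → ℝ)
    (hφ : ∀ α ∈ Set.Ioo (0:ℝ) 1, IsAdmissibleSpectrum (φ α))
    (hbddφ : ∀ α ∈ Set.Ioo (0:ℝ) 1, ∃ C : ℝ, ∀ u ∈ Set.Ico (0:ℝ) 1, φ α u ≤ C)
    (hconv : ∀ u ∈ Set.Ico (0:ℝ) 1,
      Tendsto (fun α => φ α u) (𝓝[<] (1:ℝ)) (𝓝 0))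
    (g h : ℝ → ℝ) (hgm : Measurable g) (hhm : Measurable h)
    (hgnn : ∀ u ∈ Set.Ioo (0:ℝ) 1, 0 ≤ g u) (hhnn : ∀ u ∈ Set.Ioo (0:ℝ) 1, 0 ≤ h u)
    (hratio : Tendsto (fun u => g u / h u) (𝓝[<] (1:ℝ)) (𝓝 1))
    (hbdd : ∀ α₀ ∈ Set.Ioo (0:ℝ) 1, ∃ C : ℝ,
      ∀ u ∈ Set.Ioc (0:ℝ) α₀, g u ≤ C ∧ h u ≤ C)
    (hgint : ∀ α ∈ Set.Ioo (0:ℝ) 1,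
      IntegrableOn (fun u => g u * φ α u) (Set.Ioo 0 1))
    (hhint : ∀ α ∈ Set.Ioo (0:ℝ) 1,
      IntegrableOn (fun u => h u * φ α u) (Set.Ioo 0 1))
    (hliminf : ∃ c > (0:ℝ), ∀ᶠ α in 𝓝[<] (1:ℝ),
      c ≤ ∫ u in Set.Ioo (0:ℝ) 1, h u * φ α u) :
    Tendsto (fun α => (∫ u in Set.Ioo (0:ℝ) 1, g u * φ α u) /
        ∫ u in Set.Ioo (0:ℝ) 1, h u * φ α u)
      (𝓝[<] (1:ℝ)) (𝓝 1) :=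
  stmt_18_general φ hφ hconv g h hgnn hhnn hratio hbdd hgint hhint hliminf
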